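/- arXiv:2103.03980 — 5 statements merged into one kernel-verified Lean document; each statement's English description precedes it below -/
import Mathlib

section
/- For any joint type distribution F̄ over (v, c) and any mechanism (x, p₀) with p₀ < 0, there exists a mechanism (x̂, 0) with Rev(F̄; x̂, 0) ≥ Rev(F̄; x, p₀). Moreover, if c ≥ 0 holds F̄-almost surely, then for any mechanism (x, p₀) with p₀ > 0 there also exists a mechanism (x̂, 0) with Rev(F̄; x̂, 0) ≥ Rev(F̄; x, p₀); hence with nonnegative outside options it is without loss of revenue to take p₀ = 0. -/
open MeasureTheory

/-- A single-buyer mechanism: a nondecreasing allocation rule `x : [0,∞) → [0,1]`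
together with a constant `p₀`. -/
structure Mechanism where
  x : ℝ → ℝ
  p0 : ℝ
  mono : MonotoneOn x (Set.Ici 0)
  bdd : ∀ v, 0 ≤ v → x v ∈ Set.Icc (0 : ℝ) 1

namespace Mechanism

/-- Participation utility `u(v) = ∫₀^v x(z) dz − p₀`. -/
noncomputable def util (M : Mechanism) (v : ℝ) : ℝ :=
  (∫ z in (0:ℝ)..v, M.x z) - M.p0

/-- Payment rule `p(v) = v·x(v) − ∫₀^v x(z) dz + p₀`. -/
noncomputable def pay (M : Mechanism) (v : ℝ) : ℝ :=
  v * M.x v - (∫ z in (0:ℝ)..v, M.x z) + M.p0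

/-- Revenue of mechanism `M` under joint type distribution `μ` on pairs `(v, c)`:
the buyer participates iff `u(v) ≥ c`, in which case she pays `p(v)`. -/
noncomputable def Rev (μ : Measure (ℝ × ℝ)) (M : Mechanism) : ℝ :=
  ∫ t, (if t.2 ≤ M.util t.1 then M.pay t.1 else 0) ∂μ

end Mechanism

section P0AuxSection

open MeasureTheory Set Filter Topology

namespace P0Aux

lemma ae_ne (b : ℝ) : ∀ᵐ z : ℝ, z ≠ b := by
  rw [ae_iff]
  have : {z : ℝ | ¬ z ≠ b} = {b} := by ext z; simp [not_ne_iff]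
  rw [this]
  exact measure_singleton b

lemma integral_congr_Ioo {a b : ℝ} (hab : a ≤ b) {f g : ℝ → ℝ}
    (h : ∀ z ∈ Ioo a b, f z = g z) :
    ∫ z in a..b, f z = ∫ z in a..b, g z := by
  apply intervalIntegral.integral_congr_ae
  filter_upwards [ae_ne b] with z hz hzmem
  rw [uIoc_of_le hab] at hzmem
  exact h z ⟨hzmem.1, lt_of_le_of_ne hzmem.2 hz⟩

lemma intervalIntegrable_congr_Ioo {a b : ℝ} (hab : a ≤ b) {f g : ℝ → ℝ}
    (h : ∀ z ∈ Ioo a b, f z = g z) (hg : IntervalIntegrable g volume a b) :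
    IntervalIntegrable f volume a b := by
  apply hg.congr_ae
  apply (ae_restrict_iff' measurableSet_uIoc).2
  filter_upwards [ae_ne b] with z hz hzmem
  rw [uIoc_of_le hab] at hzmem
  exact (h z ⟨hzmem.1, lt_of_le_of_ne hzmem.2 hz⟩).symm

lemma integral_eq_const_Ioo {a b k : ℝ} (hab : a ≤ b) {f : ℝ → ℝ}
    (h : ∀ z ∈ Ioo a b, f z = k) : ∫ z in a..b, f z = k * (b - a) := by
  rw [integral_congr_Ioo hab h, intervalIntegral.integral_const, smul_eq_mul, mul_comm]

lemma intervalIntegrable_const_Ioo {a b k : ℝ} (hab : a ≤ b) {f : ℝ → ℝ}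
    (h : ∀ z ∈ Ioo a b, f z = k) : IntervalIntegrable f volume a b :=
  intervalIntegrable_congr_Ioo hab h intervalIntegrable_const


lemma neg_side (μ : Measure (ℝ × ℝ)) [IsProbabilityMeasure μ] (f : ℝ × ℝ → ℝ)
    (hf : Integrable f μ) :
    ∃ (xneg : ℝ → ℝ) (gneg : ℝ × ℝ → ℝ),
      Integrable gneg μ ∧
      (∀ t : ℝ × ℝ, 0 ≤ t.1 → gneg t = 0) ∧
      (∀ v : ℝ, v < 0 → ∀ c : ℝ,
        (if c ≤ ∫ z in (0:ℝ)..v, xneg z then v * xneg v - ∫ z in (0:ℝ)..v, xneg z else 0)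
          = gneg (v, c)) ∧
      (∫ t, (if t.1 < 0 then f t else 0) ∂μ) ≤ ∫ t, gneg t ∂μ := by
  set R : ℝ := ∫ t, (if t.1 < 0 then f t else 0) ∂μ with hR
  by_cases hRpos : 0 < R
  swap
  · -- trivial: xneg = 0, gneg = 0
    push_neg at hRpos
    refine ⟨fun _ => 0, fun _ => 0, integrable_zero _ _ _, fun _ _ => rfl, ?_, ?_⟩
    · intro v hv c
      simp
    · simpa using hRpos
  · -- active case
    set A : ℕ → Set (ℝ × ℝ) := fun n => {t | t.1 < -(1 / (n + 1 : ℝ)) ∧ t.2 ≤ (n + 1 : ℝ)}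
      with hA
    have hAmeas : ∀ n, MeasurableSet (A n) := by
      intro n
      exact (measurableSet_lt measurable_fst measurable_const).inter
        (measurableSet_le measurable_snd measurable_const)
    have htend : Tendsto (fun n => ∫ t, (A n).indicator f t ∂μ) atTop
        (𝓝 R) := by
      rw [hR]
      apply tendsto_integral_of_dominated_convergence (fun t => |f t|)
        (fun n => hf.aestronglyMeasurable.indicator (hAmeas n)) hf.abs
      · intro n
        filter_upwards with t
        rw [Real.norm_eq_abs]
        by_cases ht : t ∈ A n
        · rw [Set.indicator_of_mem ht]
        · rw [Set.indicator_of_notMem ht]; simp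
      · filter_upwards with t
        by_cases ht : t.1 < 0
        · rw [if_pos ht]
          obtain ⟨m, hm⟩ := exists_nat_gt (max (1 / (-t.1)) t.2)
          apply Tendsto.congr' _ tendsto_const_nhds
          rw [EventuallyEq, eventually_atTop]
          refine ⟨m, fun n hn => ?_⟩
          have hnm : (m : ℝ) ≤ (n : ℝ) := Nat.cast_le.2 hn
          have h1 : 1 / (-t.1) < (n : ℝ) + 1 := by
            have := (max_le_iff.1 hm.le).1
            linarith [hm, le_max_left (1 / (-t.1)) t.2]
          have h2 : t.2 ≤ (n : ℝ) + 1 := by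
            linarith [le_max_right (1 / (-t.1)) t.2]
          have hmem : t ∈ A n := by
            constructor
            · have hpos : (0:ℝ) < -t.1 := by linarith
            -- 1/(n+1) < -t.1
              have : 1 / ((n:ℝ) + 1) < -t.1 := by
                rw [div_lt_iff₀ (by positivity)]
                rw [div_lt_iff₀ hpos] at h1
                nlinarith
              linarith
            · exact h2
          exact (Set.indicator_of_mem hmem f).symm
        · rw [if_neg ht]
          push_neg at ht
          have : ∀ n : ℕ, (A n).indicator f t = 0 := by
            intro n
            apply Set.indicator_of_notMem
            intro hmem
            simp only [hA, mem_setOf_eq] at hmem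
            have hp : (0:ℝ) < 1 / ((n:ℝ) + 1) := by positivity
            linarith [hmem.1]
          simp only [this]
          exact tendsto_const_nhds
    have hex : ∃ n : ℕ, 0 < ∫ t, (A n).indicator f t ∂μ :=
      (htend.eventually (eventually_gt_nhds hRpos)).exists
    obtain ⟨n, hn⟩ := hex
    have hμA : μ (A n) ≠ 0 := by
      intro h0
      have hae : ∀ᵐ t ∂μ, t ∉ A n := measure_eq_zero_iff_ae_notMem.1 h0
      have hzero : ∫ t, (A n).indicator f t ∂μ = 0 := by
        rw [integral_congr_ae (g := fun _ => (0:ℝ)) ?_, integral_zero]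
        filter_upwards [hae] with t ht
        exact Set.indicator_of_notMem ht f
      linarith
    set mA : ℝ := (μ (A n)).toReal with hmA
    have hmApos : 0 < mA := ENNReal.toReal_pos hμA (measure_ne_top μ _)
    set s : ℝ := 1 / (n + 1 : ℝ) with hs
    have hspos : 0 < s := by positivity
    set N : ℝ := (n + 1 : ℝ) with hN
    have hNpos : 0 < N := by positivity
    set P : ℝ := R / mA with hP
    have hPpos : 0 < P := div_pos hRpos hmApos
    set K₁ : ℝ := N / s with hK₁
    set K₂ : ℝ := (P + N) / s with hK₂
    have hK₁s : K₁ * s = N := div_mul_cancel₀ _ (ne_of_gt hspos)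
    have hK₂s : K₂ * s = P + N := div_mul_cancel₀ _ (ne_of_gt hspos)
    have hK₂pos : 0 < K₂ := div_pos (by linarith) hspos
    set xneg : ℝ → ℝ := fun v => if v < -s then -K₂ else -K₁ with hxneg
    set C : Set (ℝ × ℝ) := {t | t.1 < -s ∧ t.2 ≤ K₂ * (-s - t.1) + N} with hC
    have hCmeas : MeasurableSet C :=
      (measurableSet_lt measurable_fst measurable_const).inter
        (measurableSet_le measurable_snd
          ((measurable_const.mul (measurable_const.sub measurable_fst)).add measurable_const))
    refine ⟨xneg, C.indicator (fun _ => P), (integrable_const P).indicator hCmeas,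
      ?_, ?_, ?_⟩
    · intro t ht
      apply Set.indicator_of_notMem
      intro hmem
      have h1 : t.1 < -s := hmem.1
      linarith
    · intro v hv c
      by_cases hvs : v < -s
      · have hint1 : IntervalIntegrable xneg volume v (-s) :=
          intervalIntegrable_const_Ioo (le_of_lt hvs) (fun z hz => if_pos hz.2)
        have hint2 : IntervalIntegrable xneg volume (-s) 0 :=
          intervalIntegrable_const_Ioo (by linarith) (fun z hz => if_neg (not_lt.2 hz.1.le))
        have hIv : (∫ z in (0:ℝ)..v, xneg z) = K₂ * (-s - v) + N := by
          rw [intervalIntegral.integral_symm v 0]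
          rw [← intervalIntegral.integral_add_adjacent_intervals hint1 hint2]
          rw [integral_eq_const_Ioo (le_of_lt hvs) (fun z hz => if_pos hz.2),
              integral_eq_const_Ioo (by linarith : -s ≤ (0:ℝ))
                (fun z hz => if_neg (not_lt.2 hz.1.le))]
          linear_combination hK₁s
        rw [hIv]
        have hxv : xneg v = -K₂ := if_pos hvs
        rw [hxv, Set.indicator_apply]
        have hmem : ((v,c) ∈ C) ↔ c ≤ K₂ * (-s - v) + N := by
          simp only [hC, mem_setOf_eq]
          exact ⟨fun h => h.2, fun h => ⟨hvs, h⟩⟩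
        by_cases hc : c ≤ K₂ * (-s - v) + N
        · rw [if_pos hc, if_pos (hmem.2 hc)]
          linear_combination hK₂s
        · rw [if_neg hc, if_neg (fun hm => hc (hmem.1 hm))]
      · push_neg at hvs
        have hIv : (∫ z in (0:ℝ)..v, xneg z) = -K₁ * v := by
          rw [intervalIntegral.integral_symm v 0]
          rw [integral_eq_const_Ioo hv.le
            (fun z hz => if_neg (not_lt.2 (le_trans hvs hz.1.le)))]
          ring
        have hnm : (v,c) ∉ C := fun hm => absurd hm.1 (not_lt.2 hvs)
        rw [Set.indicator_of_notMem hnm, hIv]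
        have hxv : xneg v = -K₁ := if_neg (not_lt.2 hvs)
        rw [hxv]
        split_ifs with h
        · ring
        · rfl
    · have hsub : A n ⊆ C := by
        intro t ht
        refine ⟨ht.1, ?_⟩
        have h2 : t.2 ≤ N := ht.2
        have h1 : t.1 < -s := ht.1
        nlinarith [mul_nonneg hK₂pos.le (by linarith : (0:ℝ) ≤ -s - t.1)]
      have hACle : mA ≤ (μ C).toReal :=
        ENNReal.toReal_mono (measure_ne_top μ _) (measure_mono hsub)
      calc R = mA * P := by rw [hP]; field_simp
        _ ≤ (μ C).toReal * P := mul_le_mul_of_nonneg_right hACle hPpos.le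
        _ = ∫ t, C.indicator (fun _ => P) t ∂μ := by
            rw [integral_indicator_const _ hCmeas, smul_eq_mul, measureReal_def]



lemma assemble (μ : Measure (ℝ × ℝ)) [IsProbabilityMeasure μ] (M : Mechanism)
    (hf : Integrable (fun t : ℝ × ℝ => if t.2 ≤ M.util t.1 then M.pay t.1 else 0) μ)
    (xpos : ℝ → ℝ) (hmono : Monotone xpos) (hbdd : ∀ v, 0 ≤ v → xpos v ∈ Icc (0:ℝ) 1)
    (hpos : ∀ᵐ t : ℝ × ℝ ∂μ, 0 ≤ t.1 →
      ((if t.2 ≤ M.util t.1 then M.pay t.1 else 0)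
          ≤ (if t.2 ≤ ∫ z in (0:ℝ)..t.1, xpos z then
              t.1 * xpos t.1 - ∫ z in (0:ℝ)..t.1, xpos z else 0)
        ∧ |(if t.2 ≤ ∫ z in (0:ℝ)..t.1, xpos z then
              t.1 * xpos t.1 - ∫ z in (0:ℝ)..t.1, xpos z else 0)|
            ≤ |(if t.2 ≤ M.util t.1 then M.pay t.1 else 0)|)) :
    ∃ M' : Mechanism, M'.p0 = 0 ∧ M.Rev μ ≤ M'.Rev μ := by
  classical
  set f : ℝ × ℝ → ℝ := fun t => if t.2 ≤ M.util t.1 then M.pay t.1 else 0 with hfdef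
  obtain ⟨xneg, gneg, hgneg_int, hgneg0, hgneg_eq, hneg_le⟩ := neg_side μ f hf
  set xh : ℝ → ℝ := fun v => if v < 0 then xneg v else xpos v with hxh
  have hmono' : MonotoneOn xh (Ici 0) := by
    intro a ha b hb hab
    simp only [hxh, if_neg (not_lt.2 (mem_Ici.1 ha)), if_neg (not_lt.2 (mem_Ici.1 hb))]
    exact hmono hab
  have hbdd' : ∀ v, 0 ≤ v → xh v ∈ Icc (0:ℝ) 1 := by
    intro v hv
    simp only [hxh, if_neg (not_lt.2 hv)]
    exact hbdd v hv
  set M' : Mechanism := ⟨xh, 0, hmono', hbdd'⟩ with hM'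
  refine ⟨M', rfl, ?_⟩
  -- integral of xh over [0,v]
  have hIpos : ∀ v : ℝ, 0 ≤ v → (∫ z in (0:ℝ)..v, xh z) = ∫ z in (0:ℝ)..v, xpos z := by
    intro v hv
    apply intervalIntegral.integral_congr
    intro z hz
    rw [uIcc_of_le hv] at hz
    simp only [hxh, if_neg (not_lt.2 hz.1)]
  have hIneg : ∀ v : ℝ, v < 0 → (∫ z in (0:ℝ)..v, xh z) = ∫ z in (0:ℝ)..v, xneg z := by
    intro v hv
    rw [intervalIntegral.integral_symm v 0, intervalIntegral.integral_symm v 0]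
    rw [integral_congr_Ioo hv.le (fun z hz => ?_)]
    simp only [hxh, if_pos hz.2]
  set g : ℝ × ℝ → ℝ := fun t => if t.2 ≤ M'.util t.1 then M'.pay t.1 else 0 with hgdef
  set gpos : ℝ × ℝ → ℝ := fun t => if 0 ≤ t.1 then
      (if t.2 ≤ ∫ z in (0:ℝ)..t.1, xpos z then
        t.1 * xpos t.1 - ∫ z in (0:ℝ)..t.1, xpos z else 0) else 0 with hgpos
  have hg_eq : ∀ t, g t = gpos t + gneg t := by
    rintro ⟨v, c⟩
    by_cases hv : 0 ≤ v
    · have h1 : M'.util v = ∫ z in (0:ℝ)..v, xpos z := by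
        simp only [hM', Mechanism.util]
        rw [hIpos v hv]; ring
      have h2 : M'.pay v = v * xpos v - ∫ z in (0:ℝ)..v, xpos z := by
        simp only [hM', Mechanism.pay]
        rw [hIpos v hv]
        simp only [hxh, if_neg (not_lt.2 hv)]
        ring
      simp only [hgdef, hgpos, h1, h2, if_pos hv, hgneg0 (v, c) hv, add_zero]
    · push_neg at hv
      have h1 : M'.util v = ∫ z in (0:ℝ)..v, xneg z := by
        simp only [hM', Mechanism.util]
        rw [hIneg v hv]; ring
      have h2 : M'.pay v = v * xneg v - ∫ z in (0:ℝ)..v, xneg z := by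
        simp only [hM', Mechanism.pay]
        rw [hIneg v hv]
        simp only [hxh, if_pos hv]
        ring
      simp only [hgdef, hgpos, h1, h2, if_neg (not_le.2 hv), zero_add]
      exact hgneg_eq v hv c
  -- measurability of gpos
  have hxm : Measurable xpos := hmono.measurable
  have hIc : Continuous (fun v : ℝ => ∫ z in (0:ℝ)..v, xpos z) :=
    intervalIntegral.continuous_primitive (fun a b => hmono.intervalIntegrable) 0
  have hgpos_meas : Measurable gpos := by
    apply Measurable.ite (measurableSet_le measurable_const measurable_fst)
    · apply Measurable.ite
        (measurableSet_le measurable_snd (hIc.measurable.comp measurable_fst))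
      · exact (measurable_fst.mul (hxm.comp measurable_fst)).sub
          (hIc.measurable.comp measurable_fst)
      · exact measurable_const
    · exact measurable_const
  have hgpos_bound : ∀ᵐ t ∂μ, ‖gpos t‖ ≤ ‖f t‖ := by
    filter_upwards [hpos] with t ht
    by_cases hv : 0 ≤ t.1
    · simp only [hgpos, if_pos hv, Real.norm_eq_abs]
      exact (ht hv).2
    · simp only [hgpos, if_neg hv, Real.norm_eq_abs, abs_zero]
      exact abs_nonneg _
  have hgpos_int : Integrable gpos μ :=
    Integrable.mono hf hgpos_meas.aestronglyMeasurable hgpos_bound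
  -- split f
  set fpos : ℝ × ℝ → ℝ := fun t => if 0 ≤ t.1 then f t else 0 with hfpos
  set fneg : ℝ × ℝ → ℝ := fun t => if t.1 < 0 then f t else 0 with hfneg
  have hfpos_int : Integrable fpos μ := by
    have : fpos = {t : ℝ × ℝ | 0 ≤ t.1}.indicator f := by
      ext t; simp [hfpos, Set.indicator_apply]
    rw [this]
    exact hf.indicator (measurableSet_le measurable_const measurable_fst)
  have hfneg_int : Integrable fneg μ := by
    have : fneg = {t : ℝ × ℝ | t.1 < 0}.indicator f := by
      ext t; simp [hfneg, Set.indicator_apply]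
    rw [this]
    exact hf.indicator (measurableSet_lt measurable_fst measurable_const)
  have hsplit : ∀ t, f t = fpos t + fneg t := by
    intro t
    by_cases hv : 0 ≤ t.1
    · simp [hfpos, hfneg, if_pos hv, if_neg (not_lt.2 hv)]
    · simp [hfpos, hfneg, if_neg hv, if_pos (lt_of_not_ge hv)]
  have hle1 : ∫ t, fpos t ∂μ ≤ ∫ t, gpos t ∂μ := by
    apply integral_mono_ae hfpos_int hgpos_int
    filter_upwards [hpos] with t ht
    by_cases hv : 0 ≤ t.1
    · simp only [hfpos, hgpos, if_pos hv]
      exact (ht hv).1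
    · simp only [hfpos, hgpos, if_neg hv]
      exact le_rfl
  have key : M.Rev μ ≤ M'.Rev μ := by
    have e1 : M.Rev μ = ∫ t, f t ∂μ := rfl
    have e2 : M'.Rev μ = ∫ t, g t ∂μ := rfl
    rw [e1, e2]
    have e3 : ∫ t, f t ∂μ = (∫ t, fpos t ∂μ) + ∫ t, fneg t ∂μ := by
      rw [← integral_add hfpos_int hfneg_int]
      exact integral_congr_ae (Eventually.of_forall fun t => hsplit t)
    have e4 : ∫ t, g t ∂μ = (∫ t, gpos t ∂μ) + ∫ t, gneg t ∂μ := by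
      rw [← integral_add hgpos_int hgneg_int]
      exact integral_congr_ae (Eventually.of_forall fun t => hg_eq t)
    rw [e3, e4]
    have : ∫ t, fneg t ∂μ ≤ ∫ t, gneg t ∂μ := hneg_le
    linarith
  exact key


lemma pos1 (M : Mechanism) (hp0 : M.p0 < 0) :
    ∃ xpos : ℝ → ℝ, Monotone xpos ∧ (∀ v, 0 ≤ v → xpos v ∈ Icc (0:ℝ) 1) ∧
      ∀ v : ℝ, 0 ≤ v → ∀ c : ℝ,
        ((if c ≤ M.util v then M.pay v else 0)
            ≤ (if c ≤ ∫ z in (0:ℝ)..v, xpos z then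
                v * xpos v - ∫ z in (0:ℝ)..v, xpos z else 0))
          ∧ |(if c ≤ ∫ z in (0:ℝ)..v, xpos z then
                v * xpos v - ∫ z in (0:ℝ)..v, xpos z else 0)|
              ≤ |(if c ≤ M.util v then M.pay v else 0)| := by
  classical
  set F : ℝ → ℝ := fun v => ∫ z in (0:ℝ)..v, M.x z with hF
  have hpay : ∀ v, M.pay v = v * M.x v - F v + M.p0 := fun v => rfl
  have hutil : ∀ v, M.util v = F v - M.p0 := fun v => rfl
  have hInt : ∀ a b : ℝ, 0 ≤ a → a ≤ b → IntervalIntegrable M.x volume a b := by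
    intro a b ha hab
    apply MonotoneOn.intervalIntegrable
    apply M.mono.mono
    rw [uIcc_of_le hab]
    intro z hz
    exact le_trans ha hz.1
  have hIlb : ∀ a b : ℝ, 0 ≤ a → a ≤ b → 0 ≤ ∫ z in a..b, M.x z := by
    intro a b ha hab
    apply intervalIntegral.integral_nonneg hab
    intro u hu
    exact (M.bdd u (le_trans ha hu.1)).1
  have hIub : ∀ a b : ℝ, 0 ≤ a → a ≤ b → (∫ z in a..b, M.x z) ≤ (b - a) * M.x b := by
    intro a b ha hab
    calc (∫ z in a..b, M.x z) ≤ ∫ z in a..b, M.x b := by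
          apply intervalIntegral.integral_mono_on hab (hInt a b ha hab)
            intervalIntegrable_const
          intro u hu
          exact M.mono (le_trans ha hu.1) (le_trans ha hab) hu.2
      _ = (b - a) * M.x b := by rw [intervalIntegral.integral_const, smul_eq_mul]
  have hFadd : ∀ a b : ℝ, 0 ≤ a → a ≤ b → F b = F a + ∫ z in a..b, M.x z :=
    fun a b ha hab =>
      (intervalIntegral.integral_add_adjacent_intervals (hInt 0 a le_rfl ha)
        (hInt a b ha hab)).symm
  have hF0 : ∀ v, 0 ≤ v → 0 ≤ F v := fun v hv => hIlb 0 v le_rfl hv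
  have hpaymono : ∀ a b : ℝ, 0 ≤ a → a ≤ b → M.pay a ≤ M.pay b := by
    intro a b ha hab
    have h1 := hIub a b ha hab
    have h2 := hFadd a b ha hab
    have h3 : M.x a ≤ M.x b := M.mono ha (le_trans ha hab) hab
    have h4 : 0 ≤ M.x a := (M.bdd a ha).1
    rw [hpay a, hpay b, h2]
    nlinarith
  set S : Set ℝ := {v | 0 ≤ v ∧ 0 ≤ M.pay v} with hS
  by_cases hSne : S.Nonempty
  swap
  · refine ⟨fun _ => 0, monotone_const, fun v hv => ⟨le_rfl, zero_le_one⟩, ?_⟩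
    intro v hv c
    have hpayneg : M.pay v < 0 := by
      by_contra hcon
      exact hSne ⟨v, hv, not_lt.1 hcon⟩
    have hnew : (if c ≤ ∫ z in (0:ℝ)..v, (fun _ : ℝ => (0:ℝ)) z then
        v * (fun _ : ℝ => (0:ℝ)) v - ∫ z in (0:ℝ)..v, (fun _ : ℝ => (0:ℝ)) z else 0) = 0 := by
      simp
    rw [hnew]
    constructor
    · split_ifs with hc
      · linarith
      · exact le_rfl
    · rw [abs_zero]; exact abs_nonneg _
  · obtain ⟨s₀, hs₀⟩ := hSne
    have hbddS : BddBelow S := ⟨0, fun v hv => hv.1⟩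
    set v' : ℝ := sInf S with hv'
    have hv'0 : 0 ≤ v' := le_csInf ⟨s₀, hs₀⟩ (fun v hv => hv.1)
    have hv'p : -M.p0 ≤ v' := by
      apply le_csInf ⟨s₀, hs₀⟩
      intro v hv
      have h1 : 0 ≤ M.pay v := hv.2
      have h2 : 0 ≤ v := hv.1
      have h3 : v * M.x v ≤ v := by nlinarith [(M.bdd v h2).2, (M.bdd v h2).1]
      have h4 : 0 ≤ F v := hF0 v h2
      rw [hpay v] at h1
      linarith
    have hv'pos : 0 < v' := lt_of_lt_of_le (by linarith) hv'p
    set c₀ : ℝ := (F v' - M.p0) / v' with hc₀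
    have hc₀v' : c₀ * v' = F v' - M.p0 := div_mul_cancel₀ _ (ne_of_gt hv'pos)
    have hpay_lt : ∀ v, 0 ≤ v → v < v' → M.pay v < 0 := by
      intro v hv hvv
      by_contra hcon
      have hmem : v ∈ S := ⟨hv, not_lt.1 hcon⟩
      exact absurd (csInf_le hbddS hmem) (not_le.2 hvv)
    have hpay_ge : ∀ v, v' < v → 0 ≤ M.pay v := by
      intro v hvv
      obtain ⟨s, hsS, hsv⟩ := (csInf_lt_iff hbddS ⟨s₀, hs₀⟩).1 hvv
      exact le_trans hsS.2 (hpaymono s v hsS.1 hsv.le)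
    have key1 : ∀ w, v' < w → c₀ ≤ M.x w := by
      intro w hw
      have hw0 : 0 ≤ w := le_trans hv'0 hw.le
      have hxw1 : M.x w ≤ 1 := (M.bdd w hw0).2
      have hxw0 : 0 ≤ M.x w := (M.bdd w hw0).1
      have hstep : ∀ v, v' < v → v ≤ w → c₀ * v' ≤ v * M.x w := by
        intro v hv1 hv2
        have h0v : 0 ≤ v := le_trans hv'0 hv1.le
        have hp := hpay_ge v hv1
        rw [hpay v] at hp
        have hFv : F v = F v' + ∫ z in v'..v, M.x z := hFadd v' v hv'0 hv1.le
        have hIl : 0 ≤ ∫ z in v'..v, M.x z := hIlb v' v hv'0 hv1.le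
        have hxle : M.x v ≤ M.x w := M.mono h0v hw0 hv2
        have hxnn : 0 ≤ M.x v := (M.bdd v h0v).1
        rw [hc₀v']
        nlinarith
      have heps : ∀ ε : ℝ, 0 < ε → c₀ * v' ≤ v' * M.x w + ε := by
        intro ε hε
        set v := min w (v' + ε) with hvdef
        have hv1 : v' < v := lt_min hw (by linarith)
        have hv2 : v ≤ w := min_le_left _ _
        have h := hstep v hv1 hv2
        have hvle : v ≤ v' + ε := min_le_right _ _
        nlinarith
      have hfin : c₀ * v' ≤ v' * M.x w := le_of_forall_pos_le_add heps
      nlinarith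
    have hc₀0 : 0 ≤ c₀ := by
      apply div_nonneg _ hv'pos.le
      have := hF0 v' hv'0
      linarith
    have hc₀1 : c₀ ≤ 1 :=
      le_trans (key1 (v'+1) (by linarith)) (M.bdd (v'+1) (by linarith)).2
    set xpos : ℝ → ℝ := fun v => if v < v' then c₀ else max c₀ (M.x (max v v')) with hxpos
    have hmono : Monotone xpos := by
      intro a b hab
      simp only [hxpos]
      by_cases hb : b < v'
      · rw [if_pos (lt_of_le_of_lt hab hb), if_pos hb]
      · rw [if_neg hb]
        by_cases ha : a < v'
        · rw [if_pos ha]; exact le_max_left _ _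
        · rw [if_neg ha]
          apply max_le_max le_rfl
          apply M.mono (le_trans hv'0 (le_max_right a v')) (le_trans hv'0 (le_max_right b v'))
          exact max_le_max hab le_rfl
    have hbdd : ∀ v, 0 ≤ v → xpos v ∈ Icc (0:ℝ) 1 := by
      intro v hv
      simp only [hxpos]
      split_ifs with h
      · exact ⟨hc₀0, hc₀1⟩
      · constructor
        · exact le_trans hc₀0 (le_max_left _ _)
        · exact max_le hc₀1 (M.bdd (max v v') (le_trans hv'0 (le_max_right _ _))).2
    refine ⟨xpos, hmono, hbdd, ?_⟩
    have hxpos_gt : ∀ v, v' < v → xpos v = M.x v := by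
      intro v hv
      simp only [hxpos, if_neg (not_lt.2 hv.le)]
      rw [max_eq_left hv.le]
      exact max_eq_right (key1 v hv)
    have hI_le : ∀ v, 0 ≤ v → v ≤ v' → (∫ z in (0:ℝ)..v, xpos z) = c₀ * v := by
      intro v hv hvv
      rw [integral_eq_const_Ioo hv (fun z hz => if_pos (lt_of_lt_of_le hz.2 hvv))]
      ring
    have hI_gt : ∀ v, v' < v → (∫ z in (0:ℝ)..v, xpos z) = F v - M.p0 := by
      intro v hv
      have hint1 : IntervalIntegrable xpos volume 0 v' :=
        intervalIntegrable_const_Ioo hv'0 (fun z hz => if_pos hz.2)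
      have hint2 : IntervalIntegrable xpos volume v' v :=
        intervalIntegrable_congr_Ioo hv.le (fun z hz => hxpos_gt z hz.1) (hInt v' v hv'0 hv.le)
      rw [← intervalIntegral.integral_add_adjacent_intervals hint1 hint2]
      rw [integral_eq_const_Ioo hv'0 (fun z hz => if_pos hz.2)]
      rw [integral_congr_Ioo hv.le (fun z hz => hxpos_gt z hz.1)]
      have h2 := hFadd v' v hv'0 hv.le
      linarith [hc₀v']
    intro v hv c
    rcases lt_trichotomy v v' with h | h | h
    · have hIv := hI_le v hv h.le
      have hxv : xpos v = c₀ := if_pos h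
      have hnew : (if c ≤ ∫ z in (0:ℝ)..v, xpos z then
          v * xpos v - ∫ z in (0:ℝ)..v, xpos z else 0) = 0 := by
        rw [hIv, hxv]
        split_ifs with hc
        · ring
        · rfl
      rw [hnew]
      have hpv := hpay_lt v hv h
      constructor
      · split_ifs with hc
        · linarith
        · exact le_rfl
      · rw [abs_zero]; exact abs_nonneg _
    · have hIv : (∫ z in (0:ℝ)..v, xpos z) = c₀ * v := hI_le v hv h.le
      have hcv : c₀ * v = F v - M.p0 := by rw [h]; exact hc₀v'
      have hcond : M.util v = c₀ * v := by rw [hutil v, hcv]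
      have hvpos : 0 < v := by rw [h]; exact hv'pos
      have hmaxvv : max v v' = v := by rw [h]; exact max_self _
      have hxv : xpos v = max c₀ (M.x v) := by
        simp only [hxpos, if_neg (not_lt.2 h.ge), hmaxvv]
      by_cases hxc : c₀ ≤ M.x v
      · have hxv' : xpos v = M.x v := by rw [hxv]; exact max_eq_right hxc
        have hval : v * xpos v - c₀ * v = M.pay v := by
          rw [hxv', hpay v]
          linarith [hcv]
        rw [hIv, hval, hcond]
        exact ⟨le_rfl, le_rfl⟩
      · push_neg at hxc
        have hxv' : xpos v = c₀ := by rw [hxv]; exact max_eq_left hxc.le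
        have hnew0 : v * xpos v - c₀ * v = 0 := by rw [hxv']; ring
        have hpayneg : M.pay v < 0 := by
          rw [hpay v]
          nlinarith [hcv]
        rw [hIv, hnew0, hcond]
        constructor
        · split_ifs with hc
          · linarith
          · exact le_rfl
        · split_ifs with hc <;> simp [abs_nonneg]
    · have hIv := hI_gt v h
      have hxv := hxpos_gt v h
      have hval : v * M.x v - (F v - M.p0) = M.pay v := by
        rw [hpay v]; ring
      have hcond : M.util v = F v - M.p0 := hutil v
      rw [hIv, hxv, hval, ← hcond]
      exact ⟨le_rfl, le_rfl⟩


lemma pos2 (M : Mechanism) (hp0 : 0 < M.p0) :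
    ∃ xpos : ℝ → ℝ, Monotone xpos ∧ (∀ v, 0 ≤ v → xpos v ∈ Icc (0:ℝ) 1) ∧
      ∀ v : ℝ, 0 ≤ v → ∀ c : ℝ, 0 ≤ c →
        (if c ≤ ∫ z in (0:ℝ)..v, xpos z then
            v * xpos v - ∫ z in (0:ℝ)..v, xpos z else 0)
          = (if c ≤ M.util v then M.pay v else 0) := by
  classical
  set F : ℝ → ℝ := fun v => ∫ z in (0:ℝ)..v, M.x z with hF
  have hpay : ∀ v, M.pay v = v * M.x v - F v + M.p0 := fun v => rfl
  have hutil : ∀ v, M.util v = F v - M.p0 := fun v => rfl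
  have hInt : ∀ a b : ℝ, 0 ≤ a → a ≤ b → IntervalIntegrable M.x volume a b := by
    intro a b ha hab
    apply MonotoneOn.intervalIntegrable
    apply M.mono.mono
    rw [uIcc_of_le hab]
    intro z hz
    exact le_trans ha hz.1
  have hIlb : ∀ a b : ℝ, 0 ≤ a → a ≤ b → 0 ≤ ∫ z in a..b, M.x z := by
    intro a b ha hab
    apply intervalIntegral.integral_nonneg hab
    intro u hu
    exact (M.bdd u (le_trans ha hu.1)).1
  have hIub1 : ∀ a b : ℝ, 0 ≤ a → a ≤ b → (∫ z in a..b, M.x z) ≤ b - a := by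
    intro a b ha hab
    calc (∫ z in a..b, M.x z) ≤ ∫ z in a..b, (1:ℝ) := by
          apply intervalIntegral.integral_mono_on hab (hInt a b ha hab)
            intervalIntegrable_const
          intro u hu
          exact (M.bdd u (le_trans ha hu.1)).2
      _ = b - a := by rw [intervalIntegral.integral_const, smul_eq_mul, mul_one]
  have hFadd : ∀ a b : ℝ, 0 ≤ a → a ≤ b → F b = F a + ∫ z in a..b, M.x z :=
    fun a b ha hab =>
      (intervalIntegral.integral_add_adjacent_intervals (hInt 0 a le_rfl ha)
        (hInt a b ha hab)).symm
  have hF0 : ∀ v, 0 ≤ v → 0 ≤ F v := fun v hv => hIlb 0 v le_rfl hv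
  have hFle : ∀ v, 0 ≤ v → F v ≤ v := by
    intro v hv
    have := hIub1 0 v le_rfl hv
    linarith
  set S : Set ℝ := {v | 0 ≤ v ∧ M.p0 ≤ F v} with hS
  by_cases hSne : S.Nonempty
  swap
  · refine ⟨fun _ => 0, monotone_const, fun v hv => ⟨le_rfl, zero_le_one⟩, ?_⟩
    intro v hv c hc
    have hFv : F v < M.p0 := by
      by_contra hcon
      exact hSne ⟨v, hv, not_lt.1 hcon⟩
    have hutilv : M.util v < 0 := by rw [hutil v]; linarith
    have hrhs : (if c ≤ M.util v then M.pay v else 0) = 0 := by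
      rw [if_neg (not_le.2 (lt_of_lt_of_le hutilv hc))]
    rw [hrhs]
    simp
  · obtain ⟨s₀, hs₀⟩ := hSne
    have hbddS : BddBelow S := ⟨0, fun v hv => hv.1⟩
    set v' : ℝ := sInf S with hv'
    have hv'0 : 0 ≤ v' := le_csInf ⟨s₀, hs₀⟩ (fun v hv => hv.1)
    have hv'ge : M.p0 ≤ v' := by
      apply le_csInf ⟨s₀, hs₀⟩
      intro v hv
      exact le_trans hv.2 (hFle v hv.1)
    have hv'pos : 0 < v' := lt_of_lt_of_le hp0 hv'ge
    have hp0le : M.p0 ≤ F v' := by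
      apply le_of_forall_pos_le_add
      intro ε hε
      obtain ⟨s, hsS, hsv⟩ := (csInf_lt_iff hbddS ⟨s₀, hs₀⟩).1
        (lt_add_of_pos_right v' hε)
      have hsv' : v' ≤ s := csInf_le hbddS hsS
      have h1 : F s = F v' + ∫ z in v'..s, M.x z := hFadd v' s hv'0 hsv'
      have h2 : (∫ z in v'..s, M.x z) ≤ s - v' := hIub1 v' s hv'0 hsv'
      have h3 := hsS.2
      linarith
    have hle : F v' ≤ M.p0 := by
      apply le_of_forall_pos_le_add
      intro ε hε
      set δ : ℝ := min ε v' with hδ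
      have hδpos : 0 < δ := lt_min hε hv'pos
      have hδle : δ ≤ v' := min_le_right _ _
      set v := v' - δ with hvdef
      have hv0 : 0 ≤ v := by simp only [hvdef]; linarith
      have hvlt : v < v' := by simp only [hvdef]; linarith
      have hvnS : v ∉ S := notMem_of_lt_csInf hvlt hbddS
      have hFv : F v < M.p0 := by
        by_contra hcon
        exact hvnS ⟨hv0, not_lt.1 hcon⟩
      have h1 : F v' = F v + ∫ z in v..v', M.x z := hFadd v v' hv0 hvlt.le
      have h2 : (∫ z in v..v', M.x z) ≤ v' - v := hIub1 v v' hv0 hvlt.le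
      have h3 : v' - v = δ := by simp only [hvdef]; ring
      have h4 : δ ≤ ε := min_le_left _ _
      linarith
    have hFv' : F v' = M.p0 := le_antisymm hle hp0le
    set xpos : ℝ → ℝ := fun v => if v < v' then 0 else M.x (max v v') with hxpos
    have hmono : Monotone xpos := by
      intro a b hab
      simp only [hxpos]
      by_cases hb : b < v'
      · rw [if_pos (lt_of_le_of_lt hab hb), if_pos hb]
      · rw [if_neg hb]
        by_cases ha : a < v'
        · rw [if_pos ha]
          exact (M.bdd (max b v') (le_trans hv'0 (le_max_right _ _))).1
        · rw [if_neg ha]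
          apply M.mono (le_trans hv'0 (le_max_right a v')) (le_trans hv'0 (le_max_right b v'))
          exact max_le_max hab le_rfl
    have hbdd : ∀ v, 0 ≤ v → xpos v ∈ Icc (0:ℝ) 1 := by
      intro v hv
      simp only [hxpos]
      split_ifs with h
      · exact ⟨le_rfl, zero_le_one⟩
      · exact M.bdd (max v v') (le_trans hv'0 (le_max_right _ _))
    refine ⟨xpos, hmono, hbdd, ?_⟩
    have hxpos_ge : ∀ v, v' ≤ v → xpos v = M.x v := by
      intro v hv
      simp only [hxpos, if_neg (not_lt.2 hv)]
      rw [max_eq_left hv]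
    have hI_lt : ∀ v, 0 ≤ v → v ≤ v' → (∫ z in (0:ℝ)..v, xpos z) = 0 := by
      intro v hv hvv
      rw [integral_eq_const_Ioo hv
        (fun z hz => if_pos (lt_of_lt_of_le hz.2 hvv))]
      ring
    have hI_ge : ∀ v, v' ≤ v → (∫ z in (0:ℝ)..v, xpos z) = F v - M.p0 := by
      intro v hv
      have hint1 : IntervalIntegrable xpos volume 0 v' :=
        intervalIntegrable_const_Ioo hv'0 (fun z hz => if_pos hz.2)
      have hint2 : IntervalIntegrable xpos volume v' v :=
        intervalIntegrable_congr_Ioo hv (fun z hz => hxpos_ge z hz.1.le) (hInt v' v hv'0 hv)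
      rw [← intervalIntegral.integral_add_adjacent_intervals hint1 hint2]
      rw [integral_eq_const_Ioo hv'0 (fun z hz => if_pos hz.2)]
      rw [integral_congr_Ioo hv (fun z hz => hxpos_ge z hz.1.le)]
      have h2 := hFadd v' v hv'0 hv
      linarith [hFv']
    intro v hv c hc
    by_cases hvv : v < v'
    · have hIv := hI_lt v hv hvv.le
      have hxv : xpos v = 0 := if_pos hvv
      have hvnS : v ∉ S := notMem_of_lt_csInf hvv hbddS
      have hFv : F v < M.p0 := by
        by_contra hcon
        exact hvnS ⟨hv, not_lt.1 hcon⟩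
      have hutilv : M.util v < 0 := by rw [hutil v]; linarith
      rw [hIv, hxv, if_neg (not_le.2 (lt_of_lt_of_le hutilv hc))]
      split_ifs with h
      · ring
      · rfl
    · push_neg at hvv
      have hIv := hI_ge v hvv
      have hxv := hxpos_ge v hvv
      have hval : v * M.x v - (F v - M.p0) = M.pay v := by rw [hpay v]; ring
      rw [hIv, hxv, hval, ← hutil v]


end P0Aux

end P0AuxSection

/-- For any joint type distribution `F̄` and any mechanism `(x, p₀)` with
`p₀ < 0` there is a mechanism `(x̂, 0)` with weakly higher revenue; and if outside options
are almost surely nonnegative, the same holds for any mechanism with `p₀ > 0`.  Hence with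
nonnegative outside options it is without loss of revenue to take `p₀ = 0`. -/
theorem p0_normalization (μ : Measure (ℝ × ℝ)) [IsProbabilityMeasure μ] :
    (∀ M : Mechanism, M.p0 < 0 →
      ∃ M' : Mechanism, M'.p0 = 0 ∧ M.Rev μ ≤ M'.Rev μ) ∧
    ((∀ᵐ t ∂μ, 0 ≤ t.2) → ∀ M : Mechanism, 0 < M.p0 →
      ∃ M' : Mechanism, M'.p0 = 0 ∧ M.Rev μ ≤ M'.Rev μ) := by
  have trivial_case : ∀ M : Mechanism,
      ¬ Integrable (fun t : ℝ × ℝ => if t.2 ≤ M.util t.1 then M.pay t.1 else 0) μ →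
      ∃ M' : Mechanism, M'.p0 = 0 ∧ M.Rev μ ≤ M'.Rev μ := by
    intro M hf
    refine ⟨⟨fun _ => 0, 0, monotoneOn_const, fun v _ => ⟨le_rfl, zero_le_one⟩⟩, rfl, ?_⟩
    have h1 : M.Rev μ = 0 := integral_undef hf
    have h2 : Mechanism.Rev μ
        ⟨fun _ => 0, 0, monotoneOn_const, fun v _ => ⟨le_rfl, zero_le_one⟩⟩ = 0 := by
      simp [Mechanism.Rev, Mechanism.util, Mechanism.pay]
    rw [h1, h2]
  constructor
  · intro M hM
    by_cases hf : Integrable (fun t : ℝ × ℝ => if t.2 ≤ M.util t.1 then M.pay t.1 else 0) μ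
    · obtain ⟨xpos, hm, hb, hdom⟩ := P0Aux.pos1 M hM
      exact P0Aux.assemble μ M hf xpos hm hb
        (Filter.Eventually.of_forall fun t ht => hdom t.1 ht t.2)
    · exact trivial_case M hf
  · intro hc M hM
    by_cases hf : Integrable (fun t : ℝ × ℝ => if t.2 ≤ M.util t.1 then M.pay t.1 else 0) μ
    · obtain ⟨xpos, hm, hb, hdom⟩ := P0Aux.pos2 M hM
      apply P0Aux.assemble μ M hf xpos hm hb
      filter_upwards [hc] with t htc ht1
      rw [hdom t.1 ht1 t.2 htc]
      exact ⟨le_rfl, le_rfl⟩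
    · exact trivial_case M hf
end

section
/- Let (Ω, 𝓕, P) be a probability space and let t₁ = (v₁, c₁) and t₂ = (v₂, c₂) be measurable maps from Ω to [0,∞) × ℝ with v₁, v₂, c₁, c₂ integrable. Define OPT(t_k) = sup over all mechanisms (x, p₀) of ∫_Ω p(v_k(ω))·1{u(v_k(ω)) ≥ c_k(ω)} dP(ω). If sup_{ω∈Ω} max(|v₁(ω) − v₂(ω)|, |c₁(ω) − c₂(ω)|) ≤ ε, then |OPT(t₁) − OPT(t₂)| ≤ 3ε. -/
open MeasureTheory

namespace Mechanism

set_option linter.unusedSectionVars false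
set_option linter.unusedVariables false

noncomputable def X (M : Mechanism) : ℝ → ℝ := fun v => M.x (max v 0)

lemma X_mono (M : Mechanism) : Monotone M.X :=
  fun a b h => M.mono (le_max_right a 0) (le_max_right b 0) (max_le_max h le_rfl)

lemma X_nonneg (M : Mechanism) (v : ℝ) : 0 ≤ M.X v := (M.bdd _ (le_max_right _ _)).1

lemma X_le_one (M : Mechanism) (v : ℝ) : M.X v ≤ 1 := (M.bdd _ (le_max_right _ _)).2

lemma X_eq (M : Mechanism) {v : ℝ} (hv : 0 ≤ v) : M.X v = M.x v := by
  rw [X, max_eq_left hv]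

lemma X_intInt (M : Mechanism) (a b : ℝ) : IntervalIntegrable M.X volume a b :=
  M.X_mono.intervalIntegrable

noncomputable def F (M : Mechanism) : ℝ → ℝ := fun v => ∫ z in (0:ℝ)..v, M.X z

lemma F_zero (M : Mechanism) : M.F 0 = 0 := intervalIntegral.integral_same

lemma F_int_eq (M : Mechanism) {v : ℝ} (hv : 0 ≤ v) :
    (∫ z in (0:ℝ)..v, M.x z) = M.F v := by
  refine intervalIntegral.integral_congr (fun z hz => ?_)
  rw [Set.uIcc_of_le hv] at hz
  exact (M.X_eq hz.1).symm

lemma util_eq (M : Mechanism) {v : ℝ} (hv : 0 ≤ v) : M.util v = M.F v - M.p0 := by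
  rw [util, M.F_int_eq hv]

lemma pay_eq (M : Mechanism) {v : ℝ} (hv : 0 ≤ v) :
    M.pay v = v * M.X v - M.F v + M.p0 := by
  rw [pay, M.F_int_eq hv, M.X_eq hv]

lemma F_sub_eq (M : Mechanism) (a b : ℝ) : M.F b - M.F a = ∫ z in a..b, M.X z :=
  intervalIntegral.integral_interval_sub_left (M.X_intInt 0 b) (M.X_intInt 0 a)

lemma F_sub_le_mul (M : Mechanism) {a b : ℝ} (hab : a ≤ b) :
    M.F b - M.F a ≤ (b - a) * M.X b := by
  rw [M.F_sub_eq a b]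
  calc (∫ z in a..b, M.X z) ≤ ∫ _ in a..b, M.X b := by
        refine intervalIntegral.integral_mono_on hab (M.X_intInt a b)
          (intervalIntegrable_const) (fun z hz => M.X_mono hz.2)
    _ = (b - a) * M.X b := by simp [intervalIntegral.integral_const, smul_eq_mul]

lemma mul_le_F_sub (M : Mechanism) {a b : ℝ} (hab : a ≤ b) {m : ℝ}
    (hm : ∀ z ∈ Set.Ioc a b, m ≤ M.X z) : (b - a) * m ≤ M.F b - M.F a := by
  rw [M.F_sub_eq a b]
  have : ((b - a) : ℝ) * m = ∫ _ in a..b, m := by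
    simp [intervalIntegral.integral_const, smul_eq_mul]
  rw [this, intervalIntegral.integral_of_le hab, intervalIntegral.integral_of_le hab]
  exact setIntegral_mono_on (integrableOn_const (by simp) (by simp))
    ((M.X_intInt a b).1) measurableSet_Ioc hm

lemma F_sub_le (M : Mechanism) {a b : ℝ} (hab : a ≤ b) : M.F b - M.F a ≤ b - a := by
  have := M.F_sub_le_mul hab
  nlinarith [M.X_le_one b, sub_nonneg.2 hab]

lemma F_mono (M : Mechanism) : Monotone M.F := by
  intro a b hab
  have := M.mul_le_F_sub hab (m := 0) (fun z _ => M.X_nonneg z)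
  linarith

lemma F_nonneg (M : Mechanism) {v : ℝ} (hv : 0 ≤ v) : 0 ≤ M.F v := by
  have := M.F_mono hv; rwa [F_zero] at this

lemma F_le (M : Mechanism) {v : ℝ} (hv : 0 ≤ v) : M.F v ≤ v := by
  have := M.F_sub_le hv; rwa [F_zero, sub_zero, sub_zero] at this

lemma F_le_mul_X (M : Mechanism) {v : ℝ} (hv : 0 ≤ v) : M.F v ≤ v * M.X v := by
  have := M.F_sub_le_mul hv; rwa [F_zero, sub_zero, sub_zero] at this

lemma p0_le_pay (M : Mechanism) {v : ℝ} (hv : 0 ≤ v) : M.p0 ≤ M.pay v := by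
  rw [M.pay_eq hv]; have := M.F_le_mul_X hv; linarith

lemma F_lipschitz (M : Mechanism) : LipschitzWith 1 M.F := by
  refine LipschitzWith.of_dist_le_mul (fun a b => ?_)
  rw [Real.dist_eq, Real.dist_eq]; push_cast; rw [one_mul]
  rcases le_total a b with h | h
  · have h1 := M.F_sub_le h
    have h2 := M.mul_le_F_sub h (m := 0) (fun z _ => M.X_nonneg z)
    rw [abs_of_nonpos (by linarith), abs_of_nonpos (by linarith)]; linarith
  · have h1 := M.F_sub_le h
    have h2 := M.mul_le_F_sub h (m := 0) (fun z _ => M.X_nonneg z)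
    rw [abs_of_nonneg (by linarith), abs_of_nonneg (by linarith)]; linarith

lemma F_continuous (M : Mechanism) : Continuous M.F := M.F_lipschitz.continuous

lemma F_measurable (M : Mechanism) : Measurable M.F := M.F_continuous.measurable

lemma X_measurable (M : Mechanism) : Measurable M.X := M.X_mono.measurable


noncomputable def null : Mechanism :=
  ⟨fun _ => 0, 0, monotoneOn_const, fun _ _ => by simp⟩

instance : Nonempty Mechanism := ⟨null⟩

lemma null_util (v : ℝ) : null.util v = 0 := by simp [util, null]

lemma null_pay (v : ℝ) : null.pay v = 0 := by simp [pay, null]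

set_option linter.unusedSectionVars false

variable {Ω : Type*} [MeasurableSpace Ω] {P : Measure Ω} [IsFiniteMeasure P]

lemma integrand_eq (M : Mechanism) {v c : Ω → ℝ} (hv0 : ∀ ω, 0 ≤ v ω) :
    (fun ω => if c ω ≤ M.util (v ω) then M.pay (v ω) else 0) =
      fun ω => if c ω ≤ M.F (v ω) - M.p0 then v ω * M.X (v ω) - M.F (v ω) + M.p0 else 0 := by
  funext ω
  rw [M.util_eq (hv0 ω), M.pay_eq (hv0 ω)]

lemma integrand_measurable (M : Mechanism) {v c : Ω → ℝ}
    (hv : Measurable v) (hc : Measurable c) (hv0 : ∀ ω, 0 ≤ v ω) :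
    Measurable (fun ω => if c ω ≤ M.util (v ω) then M.pay (v ω) else 0) := by
  rw [M.integrand_eq hv0]
  have hF : Measurable fun ω => M.F (v ω) := M.F_measurable.comp hv
  have hX : Measurable fun ω => M.X (v ω) := M.X_measurable.comp hv
  exact Measurable.ite (measurableSet_le hc (hF.sub measurable_const))
    (((hv.mul hX).sub hF).add measurable_const) measurable_const

lemma integrand_abs_le (M : Mechanism) {v c : Ω → ℝ} (hv0 : ∀ ω, 0 ≤ v ω) (ω : Ω) :
    |if c ω ≤ M.util (v ω) then M.pay (v ω) else 0| ≤ v ω + |c ω| + |M.p0| := by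
  have hv' := hv0 ω
  have h1 : (0:ℝ) ≤ v ω + |c ω| := by positivity
  by_cases h : c ω ≤ M.util (v ω)
  · rw [if_pos h]
    rw [M.util_eq hv'] at h
    rw [M.pay_eq hv']
    have hXle := M.X_le_one (v ω)
    have hX0 := M.X_nonneg (v ω)
    have hF0 := M.F_nonneg hv'
    have hFle := M.F_le_mul_X hv'
    rw [abs_le]
    constructor
    · have := neg_abs_le M.p0; nlinarith [abs_nonneg (c ω)]
    · have hp0le : M.p0 ≤ M.F (v ω) - c ω := by linarith
      have h2 : v ω * M.X (v ω) ≤ v ω := by nlinarith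
      have := abs_nonneg M.p0
      have hc' := neg_abs_le (c ω)
      linarith
  · rw [if_neg h, abs_zero]
    have := abs_nonneg M.p0; linarith

lemma integrand_le (M : Mechanism) {v c : Ω → ℝ} (hv0 : ∀ ω, 0 ≤ v ω) (ω : Ω) :
    (if c ω ≤ M.util (v ω) then M.pay (v ω) else 0) ≤ v ω + |c ω| := by
  have hv' := hv0 ω
  by_cases h : c ω ≤ M.util (v ω)
  · rw [if_pos h]
    rw [M.util_eq hv'] at h
    rw [M.pay_eq hv']
    have hXle := M.X_le_one (v ω)
    have hX0 := M.X_nonneg (v ω)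
    have hFle := M.F_le_mul_X hv'
    have hp0le : M.p0 ≤ M.F (v ω) - c ω := by linarith
    have h2 : v ω * M.X (v ω) ≤ v ω := by nlinarith
    have hc' := neg_abs_le (c ω)
    linarith
  · rw [if_neg h]; positivity

lemma integrand_integrable (M : Mechanism) {v c : Ω → ℝ}
    (hv : Measurable v) (hc : Measurable c)
    (hvi : Integrable v P) (hci : Integrable c P) (hv0 : ∀ ω, 0 ≤ v ω) :
    Integrable (fun ω => if c ω ≤ M.util (v ω) then M.pay (v ω) else 0) P := by
  refine Integrable.mono' ((hvi.add hci.abs).add (integrable_const |M.p0|))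
    (M.integrand_measurable hv hc hv0).aestronglyMeasurable
    (Filter.Eventually.of_forall fun ω => ?_)
  rw [Real.norm_eq_abs]
  exact M.integrand_abs_le hv0 ω

lemma rev_bddAbove {v c : Ω → ℝ}
    (hv : Measurable v) (hc : Measurable c)
    (hvi : Integrable v P) (hci : Integrable c P) (hv0 : ∀ ω, 0 ≤ v ω) :
    BddAbove (Set.range fun M : Mechanism =>
      ∫ ω, (if c ω ≤ M.util (v ω) then M.pay (v ω) else 0) ∂P) := by
  refine ⟨∫ ω, (v ω + |c ω|) ∂P, Set.forall_mem_range.2 fun M => ?_⟩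
  exact integral_mono (M.integrand_integrable hv hc hvi hci hv0) (hvi.add hci.abs)
    (fun ω => M.integrand_le hv0 ω)


variable {Ω : Type*} [MeasurableSpace Ω] {P : Measure Ω} [IsFiniteMeasure P]

lemma exists_p0_nonneg (M : Mechanism) {v c : Ω → ℝ}
    (hv : Measurable v) (hc : Measurable c)
    (hvi : Integrable v P) (hci : Integrable c P) (hv0 : ∀ ω, 0 ≤ v ω) :
    (∫ ω, (if c ω ≤ M.util (v ω) then M.pay (v ω) else 0) ∂P) ≤ 0 ∨
    ∃ M' : Mechanism, 0 ≤ M'.p0 ∧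
      (∫ ω, (if c ω ≤ M.util (v ω) then M.pay (v ω) else 0) ∂P) ≤
        ∫ ω, (if c ω ≤ M'.util (v ω) then M'.pay (v ω) else 0) ∂P := by
  classical
  set S := {t : ℝ | 0 ≤ t ∧ 0 ≤ M.pay t} with hS_def
  by_cases hS : S.Nonempty
  · right
    have hbdd : BddBelow S := ⟨0, fun t ht => ht.1⟩
    set t0 := sInf S with ht0_def
    have ht00 : 0 ≤ t0 := le_csInf hS fun t ht => ht.1
    have himg : (M.X '' Set.Ioi t0).Nonempty :=
      ⟨M.X (t0 + 1), ⟨t0 + 1, by simp, rfl⟩⟩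
    have himgbdd : BddBelow (M.X '' Set.Ioi t0) := by
      refine ⟨0, ?_⟩
      rintro y ⟨t, _, rfl⟩
      exact M.X_nonneg t
    set ξ := sInf (M.X '' Set.Ioi t0) with hξ_def
    have hξle : ∀ t, t0 < t → ξ ≤ M.X t := fun t ht => csInf_le himgbdd ⟨t, ht, rfl⟩
    have hXξ : M.X t0 ≤ ξ := by
      refine le_csInf himg ?_
      rintro y ⟨t, ht, rfl⟩
      exact M.X_mono (le_of_lt ht)
    have hξ0 : (0:ℝ) ≤ ξ := (M.X_nonneg t0).trans hXξ
    have hξ1 : ξ ≤ 1 := (hξle (t0 + 1) (by linarith)).trans (M.X_le_one _)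
    set A := t0 * ξ - M.F t0 + M.p0 with hA_def
    have payt0 : M.pay t0 = t0 * M.X t0 - M.F t0 + M.p0 := M.pay_eq ht00
    -- A is nonnegative
    have hA : 0 ≤ A := by
      by_contra hA'
      push_neg at hA'
      have ht0pos : (0:ℝ) < t0 + 1 := by linarith
      set δ := -A / (2 * (t0 + 1)) with hδ_def
      have hδ : 0 < δ := div_pos (by linarith) (by linarith)
      obtain ⟨y, ⟨t', ht', rfl⟩, hy⟩ :=
        exists_lt_of_csInf_lt himg (lt_add_of_pos_right ξ hδ)
      set t := min t' (t0 + 1) with ht_def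
      have htgt : t0 < t := lt_min ht' (by linarith)
      have htle : t ≤ t0 + 1 := min_le_right _ _
      have hXt : M.X t ≤ ξ + δ := le_trans (M.X_mono (min_le_left _ _)) (le_of_lt hy)
      by_cases hmem : t0 ∈ S
      · have h1 : 0 ≤ M.pay t0 := hmem.2
        nlinarith [mul_nonneg ht00 (sub_nonneg.2 hXξ)]
      · obtain ⟨s, hsS, hst⟩ := exists_lt_of_csInf_lt hS (show sInf S < t from htgt)
        have hs0 : t0 ≤ s := csInf_le hbdd hsS
        have hsgt : t0 < s := lt_of_le_of_ne hs0 (fun h => hmem (h ▸ hsS))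
        have hpays : 0 ≤ s * M.X s - M.F s + M.p0 := by
          have := hsS.2
          rwa [M.pay_eq hsS.1] at this
        have hFs : (s - t0) * ξ ≤ M.F s - M.F t0 :=
          M.mul_le_F_sub (le_of_lt hsgt) (fun z hz => hξle z hz.1)
        have hXs : M.X s ≤ ξ + δ := (M.X_mono (le_of_lt hst)).trans hXt
        have hsle : s ≤ t0 + 1 := le_trans (le_of_lt hst) htle
        have hkey : -(t0 + 1) * δ ≤ A := by
          nlinarith [mul_nonneg hsS.1 (by linarith : (0:ℝ) ≤ ξ + δ - M.X s),
            mul_nonneg (by linarith : (0:ℝ) ≤ t0 + 1 - s) hδ.le]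
        have heq : -(t0 + 1) * δ = A / 2 := by
          rw [hδ_def]
          field_simp
        linarith
    -- the truncated mechanism
    have hmono : Monotone fun w => if t0 < w then M.X w else ξ := by
      intro a b hab
      dsimp only
      by_cases hb : t0 < b
      · by_cases ha : t0 < a
        · rw [if_pos ha, if_pos hb]; exact M.X_mono hab
        · rw [if_pos hb, if_neg ha]; exact hξle b hb
      · have ha : ¬ t0 < a := fun h => hb (lt_of_lt_of_le h hab)
        rw [if_neg ha, if_neg hb]
    set MM : Mechanism := ⟨fun w => if t0 < w then M.X w else ξ, A,
      hmono.monotoneOn _, fun w _ => by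
        split
        · exact ⟨M.X_nonneg w, M.X_le_one w⟩
        · exact ⟨hξ0, hξ1⟩⟩ with hMM_def
    have hMMx : ∀ w, MM.x w = if t0 < w then M.X w else ξ := fun _ => rfl
    have hMMint : ∀ a b : ℝ, IntervalIntegrable MM.x volume a b :=
      fun a b => hmono.intervalIntegrable
    have hI1 : ∀ w : ℝ, w ≤ t0 → (∫ z in (0:ℝ)..w, MM.x z) = w * ξ := by
      intro w hw
      have : (∫ z in (0:ℝ)..w, MM.x z) = ∫ _ in (0:ℝ)..w, ξ := by
        refine intervalIntegral.integral_congr (fun z hz => ?_)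
        rw [hMMx, if_neg]
        rcases Set.mem_uIcc.1 hz with h | h
        · exact not_lt.2 (h.2.trans hw)
        · exact not_lt.2 (h.2.trans ht00)
      rw [this, intervalIntegral.integral_const, smul_eq_mul, sub_zero]
    have hI2 : ∀ w : ℝ, t0 ≤ w →
        (∫ z in (0:ℝ)..w, MM.x z) = t0 * ξ + (M.F w - M.F t0) := by
      intro w hw
      have hadd := intervalIntegral.integral_add_adjacent_intervals
        (hMMint 0 t0) (hMMint t0 w)
      have h2 : (∫ z in t0..w, MM.x z) = ∫ z in t0..w, M.X z := by
        refine intervalIntegral.integral_congr_ae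
          (Filter.Eventually.of_forall (fun z hz => ?_))
        rw [Set.uIoc_of_le hw] at hz
        exact if_pos hz.1
      rw [hI1 t0 le_rfl, h2, ← M.F_sub_eq t0 w] at hadd
      linarith
    refine ⟨MM, hA, ?_⟩
    refine integral_mono (M.integrand_integrable hv hc hvi hci hv0)
      (MM.integrand_integrable hv hc hvi hci hv0) (fun ω => ?_)
    have hvω := hv0 ω
    rcases lt_trichotomy (v ω) t0 with h | h | h
    · have hneg : M.pay (v ω) < 0 := by
        by_contra hp
        push_neg at hp
        have : v ω ∈ S := ⟨hvω, hp⟩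
        exact absurd (csInf_le hbdd this) (not_le.2 h)
      have hMMpay : MM.pay (v ω) = A := by
        rw [pay, hMMx, if_neg (not_lt.2 h.le), hI1 _ h.le]
        ring
      have hL : (if c ω ≤ M.util (v ω) then M.pay (v ω) else 0) ≤ 0 := by
        split
        · linarith
        · exact le_refl 0
      refine hL.trans ?_
      split
      · rw [hMMpay]; exact hA
      · exact le_rfl
    · have hMMutil : MM.util (v ω) = M.util (v ω) := by
        rw [util, hI1 _ h.le, M.util_eq hvω, h]
        show t0 * ξ - (t0 * ξ - M.F t0 + M.p0) = M.F t0 - M.p0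
        ring
      have hMMpay : MM.pay (v ω) = A := by
        rw [pay]
        rw [hMMx, if_neg (by rw [h]; exact lt_irrefl t0), hI1 _ h.le]
        show v ω * ξ - v ω * ξ + (t0 * ξ - M.F t0 + M.p0) = t0 * ξ - M.F t0 + M.p0
        ring
      have hpayle : M.pay (v ω) ≤ A := by
        rw [h, payt0, hA_def]
        nlinarith [mul_nonneg ht00 (sub_nonneg.2 hXξ)]
      rw [hMMutil, hMMpay]
      split
      · exact hpayle
      · exact le_rfl
    · have hMMutil : MM.util (v ω) = M.util (v ω) := by
        rw [util, hI2 _ h.le, M.util_eq hvω]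
        show t0 * ξ + (M.F (v ω) - M.F t0) - (t0 * ξ - M.F t0 + M.p0) = M.F (v ω) - M.p0
        ring
      have hMMpay : MM.pay (v ω) = M.pay (v ω) := by
        rw [pay, hMMx, if_pos h, hI2 _ h.le, M.pay_eq hvω, M.X_eq hvω]
        show v ω * M.x (v ω) - (t0 * ξ + (M.F (v ω) - M.F t0)) + (t0 * ξ - M.F t0 + M.p0) = _
        ring
      rw [hMMutil, hMMpay]
  · left
    refine integral_nonpos (fun ω => ?_)
    dsimp only
    split
    · rename_i h
      by_contra hp
      push_neg at hp
      exact hS ⟨v ω, hv0 ω, hp.le⟩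
    · exact le_refl (0:ℝ)


noncomputable def shift (M : Mechanism) (ε : ℝ) : Mechanism :=
  ⟨fun w => M.X (w + ε), M.p0 - 2 * ε,
   (show Monotone fun w => M.X (w + ε) from
     fun a b hab => M.X_mono (add_le_add_left hab ε)).monotoneOn _,
   fun w _ => ⟨M.X_nonneg _, M.X_le_one _⟩⟩

lemma shift_int (M : Mechanism) (ε : ℝ) (b : ℝ) :
    (∫ z in (0:ℝ)..b, M.X (z + ε)) = M.F (b + ε) - M.F ε := by
  rw [intervalIntegral.integral_comp_add_right (fun z => M.X z) ε, zero_add,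
    ← M.F_sub_eq ε (b + ε)]

lemma shift_util (M : Mechanism) (ε : ℝ) (b : ℝ) :
    (M.shift ε).util b = M.F (b + ε) - M.F ε - (M.p0 - 2 * ε) := by
  rw [util]
  show (∫ z in (0:ℝ)..b, M.X (z + ε)) - (M.p0 - 2 * ε) = _
  rw [M.shift_int ε b]

lemma shift_pay (M : Mechanism) (ε : ℝ) (b : ℝ) :
    (M.shift ε).pay b = b * M.X (b + ε) - (M.F (b + ε) - M.F ε) + (M.p0 - 2 * ε) := by
  rw [pay]
  show b * M.X (b + ε) - (∫ z in (0:ℝ)..b, M.X (z + ε)) + (M.p0 - 2 * ε) = _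
  rw [M.shift_int ε b]

variable {Ω : Type*} [MeasurableSpace Ω] {P : Measure Ω} [IsProbabilityMeasure P]

lemma shift_rev (M : Mechanism) (hp0 : 0 ≤ M.p0)
    {v₁ c₁ v₂ c₂ : Ω → ℝ}
    (hv₁ : Measurable v₁) (hc₁ : Measurable c₁)
    (hv₂ : Measurable v₂) (hc₂ : Measurable c₂)
    (hv₁i : Integrable v₁ P) (hc₁i : Integrable c₁ P)
    (hv₂i : Integrable v₂ P) (hc₂i : Integrable c₂ P)
    (hv₁0 : ∀ ω, 0 ≤ v₁ ω) (hv₂0 : ∀ ω, 0 ≤ v₂ ω)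
    {ε : ℝ} (hε : 0 ≤ ε)
    (hclose : ∀ ω, max |v₁ ω - v₂ ω| |c₁ ω - c₂ ω| ≤ ε) :
    (∫ ω, (if c₁ ω ≤ M.util (v₁ ω) then M.pay (v₁ ω) else 0) ∂P) - 3 * ε ≤
      ∫ ω, (if c₂ ω ≤ (M.shift ε).util (v₂ ω) then (M.shift ε).pay (v₂ ω) else 0) ∂P := by
  set N := M.shift ε with hN_def
  have key : ∀ ω, (if c₁ ω ≤ M.util (v₁ ω) then M.pay (v₁ ω) else 0) - 3 * ε ≤
      (if c₂ ω ≤ N.util (v₂ ω) then N.pay (v₂ ω) else 0) := by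
    intro ω
    have ha : 0 ≤ v₁ ω := hv₁0 ω
    have hb : 0 ≤ v₂ ω := hv₂0 ω
    set a := v₁ ω
    set b := v₂ ω
    have hvab := abs_le.1 (le_trans (le_max_left _ _) (hclose ω))
    have hcab := abs_le.1 (le_trans (le_max_right _ _) (hclose ω))
    have h1 : a ≤ b + ε := by linarith [hvab.2]
    have hutil := M.shift_util ε b
    have hpay := M.shift_pay ε b
    have hFmono : M.F a ≤ M.F (b + ε) := M.F_mono (by linarith)
    have hFε1 : M.F ε ≤ ε := M.F_le hε
    have hFε0 : 0 ≤ M.F ε := M.F_nonneg hε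
    by_cases hpart : c₁ ω ≤ M.util a
    · rw [if_pos hpart]
      rw [M.util_eq ha] at hpart
      have hpart2 : c₂ ω ≤ N.util b := by
        rw [hN_def, hutil]
        linarith [hcab.1]
      rw [if_pos hpart2, hN_def, hpay, M.pay_eq ha]
      have hXab : M.X a ≤ M.X (b + ε) := M.X_mono (by linarith)
      have hXle1 : M.X (b + ε) ≤ 1 := M.X_le_one _
      have hXa0 : 0 ≤ M.X a := M.X_nonneg _
      have hFsub : M.F (b + ε) - M.F a ≤ (b + ε - a) * M.X (b + ε) :=
        M.F_sub_le_mul (by linarith)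
      nlinarith [mul_nonneg ha (sub_nonneg.2 hXab), mul_nonneg hε (sub_nonneg.2 hXle1)]
    · rw [if_neg hpart]
      split
      · have h2 := N.p0_le_pay hb
        have hNp0 : N.p0 = M.p0 - 2 * ε := rfl
        linarith
      · linarith
  have hint1 := M.integrand_integrable hv₁ hc₁ hv₁i hc₁i hv₁0
  have hint2 := N.integrand_integrable hv₂ hc₂ hv₂i hc₂i hv₂0
  have h := integral_mono (hint1.sub (integrable_const (3 * ε))) hint2 key
  have heq : (∫ ω, ((if c₁ ω ≤ M.util (v₁ ω) then M.pay (v₁ ω) else 0) - 3 * ε) ∂P)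
      = (∫ ω, (if c₁ ω ≤ M.util (v₁ ω) then M.pay (v₁ ω) else 0) ∂P) - 3 * ε := by
    rw [integral_sub hint1 (integrable_const (3 * ε)), integral_const, probReal_univ,
      one_smul]
  rw [Pi.sub_def] at h
  linarith [h, heq]


end Mechanism

lemma opt_one_side {Ω : Type*} [MeasurableSpace Ω] (P : Measure Ω) [IsProbabilityMeasure P]
    (v₁ c₁ v₂ c₂ : Ω → ℝ)
    (hv₁m : Measurable v₁) (hc₁m : Measurable c₁)
    (hv₂m : Measurable v₂) (hc₂m : Measurable c₂)
    (hv₁i : Integrable v₁ P) (hc₁i : Integrable c₁ P)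
    (hv₂i : Integrable v₂ P) (hc₂i : Integrable c₂ P)
    (hv₁0 : ∀ ω, 0 ≤ v₁ ω) (hv₂0 : ∀ ω, 0 ≤ v₂ ω)
    (ε : ℝ)
    (hclose : ∀ ω, max |v₁ ω - v₂ ω| |c₁ ω - c₂ ω| ≤ ε) :
    (⨆ M : Mechanism, ∫ ω, (if c₁ ω ≤ M.util (v₁ ω) then M.pay (v₁ ω) else 0) ∂P) ≤
      (⨆ M : Mechanism, ∫ ω, (if c₂ ω ≤ M.util (v₂ ω) then M.pay (v₂ ω) else 0) ∂P)
        + 3 * ε := by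
  have hΩ : Nonempty Ω := by
    by_contra h
    have h1 := measure_univ (μ := P)
    rw [Set.univ_eq_empty_iff.mpr (not_nonempty_iff.mp h)] at h1
    simp at h1
  obtain ⟨ω0⟩ := hΩ
  have hε : 0 ≤ ε := le_trans (le_trans (abs_nonneg _) (le_max_left _ _)) (hclose ω0)
  have hbdd2 := Mechanism.rev_bddAbove (P := P) hv₂m hc₂m hv₂i hc₂i hv₂0
  have hOPT2 : 0 ≤ ⨆ M : Mechanism,
      ∫ ω, (if c₂ ω ≤ M.util (v₂ ω) then M.pay (v₂ ω) else 0) ∂P := by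
    have h2 := le_ciSup hbdd2 Mechanism.null
    have h0 : (∫ ω, (if c₂ ω ≤ Mechanism.null.util (v₂ ω)
        then Mechanism.null.pay (v₂ ω) else 0) ∂P) = 0 := by
      simp [Mechanism.null_util, Mechanism.null_pay]
    linarith
  refine ciSup_le (fun M => ?_)
  rcases M.exists_p0_nonneg hv₁m hc₁m hv₁i hc₁i hv₁0 with h | ⟨M', hp0, hle⟩
  · linarith
  · have hs := M'.shift_rev hp0 hv₁m hc₁m hv₂m hc₂m hv₁i hc₁i hv₂i hc₂i
      hv₁0 hv₂0 hε hclose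
    have hle2 := le_ciSup hbdd2 (M'.shift ε)
    linarith


/-- **robustness of the optimal revenue.** If two type random variables
`t₁ = (v₁, c₁)` and `t₂ = (v₂, c₂)` on a common probability space are within `ε` of each
other in sup-norm, then the optimal revenues they induce are within `3ε`. -/
theorem opt_revenue_robust
    {Ω : Type*} [MeasurableSpace Ω] (P : Measure Ω) [IsProbabilityMeasure P]
    (v₁ c₁ v₂ c₂ : Ω → ℝ)
    (hv₁m : Measurable v₁) (hc₁m : Measurable c₁)
    (hv₂m : Measurable v₂) (hc₂m : Measurable c₂)
    (hv₁i : Integrable v₁ P) (hc₁i : Integrable c₁ P)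
    (hv₂i : Integrable v₂ P) (hc₂i : Integrable c₂ P)
    (hv₁0 : ∀ ω, 0 ≤ v₁ ω) (hv₂0 : ∀ ω, 0 ≤ v₂ ω)
    (ε : ℝ)
    (hclose : ∀ ω, max |v₁ ω - v₂ ω| |c₁ ω - c₂ ω| ≤ ε) :
    |(⨆ M : Mechanism, ∫ ω, (if c₁ ω ≤ M.util (v₁ ω) then M.pay (v₁ ω) else 0) ∂P) -
      (⨆ M : Mechanism, ∫ ω, (if c₂ ω ≤ M.util (v₂ ω) then M.pay (v₂ ω) else 0) ∂P)|
      ≤ 3 * ε := by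
  have hclose' : ∀ ω, max |v₂ ω - v₁ ω| |c₂ ω - c₁ ω| ≤ ε := by
    intro ω
    rw [abs_sub_comm (v₂ ω), abs_sub_comm (c₂ ω)]
    exact hclose ω
  rw [abs_sub_le_iff]
  constructor
  · rw [sub_le_iff_le_add, add_comm]
    exact opt_one_side P v₁ c₁ v₂ c₂ hv₁m hc₁m hv₂m hc₂m hv₁i hc₁i hv₂i hc₂i
      hv₁0 hv₂0 ε hclose
  · rw [sub_le_iff_le_add, add_comm]
    exact opt_one_side P v₂ c₂ v₁ c₁ hv₂m hc₂m hv₁m hc₁m hv₂i hc₂i hv₁i hc₁i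
      hv₂0 hv₁0 ε hclose'
end

section
/- Let F be a distribution on [0,∞) with differentiable density f and virtual value φ(v) = v − (1−F(v))/f(v), and suppose F is regular, i.e., φ is nondecreasing. Let v* = inf{v ≥ 0 : φ(v) ≥ 0}. Then the function v ↦ f(v)·φ(v) is nondecreasing on [0, v*]. -/
/-- If `g` is monotone on `Ici 0` and has derivative `c` at an interior point `x > 0`,
then `0 ≤ c`. -/
lemma aux_deriv_nonneg_of_monotoneOn {g : ℝ → ℝ} (hg : MonotoneOn g (Set.Ici 0))
    {x c : ℝ} (hx : 0 < x) (hd : HasDerivAt g c x) : 0 ≤ c := by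
  have h := hasDerivAt_iff_tendsto_slope.mp hd
  have h' : Filter.Tendsto (slope g x) (nhdsWithin x (Set.Ioi x)) (nhds c) :=
    h.mono_left (nhdsWithin_mono x fun t ht => ne_of_gt ht)
  refine ge_of_tendsto h' ?_
  filter_upwards [self_mem_nhdsWithin] with t ht
  have hxt : x < t := ht
  have h1 : g x ≤ g t := hg (le_of_lt hx) (le_of_lt (hx.trans hxt)) hxt.le
  have : 0 ≤ (g t - g x) / (t - x) := div_nonneg (by linarith) (by linarith)
  simpa [slope_def_field, div_eq_inv_mul] using this

/-- Let `F` be a regular distribution on `[0,∞)` with differentiable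
density `f` and virtual value `φ(v) = v − (1−F(v))/f(v)`, and let
`v* = inf{v ≥ 0 : φ(v) ≥ 0}`.  Then `v ↦ f(v)·φ(v)` is nondecreasing on `[0, v*]`. -/
theorem regular_revenue_density_monotone_below_vstar
    (F f : ℝ → ℝ)
    (hf_pos : ∀ v, 0 ≤ v → 0 < f v)
    (hF_deriv : ∀ v, 0 ≤ v → HasDerivAt F (f v) v)
    (hF0 : F 0 = 0) (hF_le_one : ∀ v, F v ≤ 1)
    (hf_diff : DifferentiableOn ℝ f (Set.Ici 0))
    (φ : ℝ → ℝ) (hφ : ∀ v, φ v = v - (1 - F v) / f v)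
    (hreg : MonotoneOn φ (Set.Ici 0)) :
    MonotoneOn (fun v => f v * φ v)
      (Set.Icc 0 (sInf {v : ℝ | 0 ≤ v ∧ 0 ≤ φ v})) := by
  set S : Set ℝ := {v : ℝ | 0 ≤ v ∧ 0 ≤ φ v} with hS
  set vs : ℝ := sInf S with hvs
  -- the function h agrees with f·φ on [0,∞)
  set h : ℝ → ℝ := fun v => v * f v - (1 - F v) with hh
  have hEq : ∀ v, 0 ≤ v → f v * φ v = h v := by
    intro v hv
    have hf := (hf_pos v hv).ne'
    rw [hφ v]
    field_simp [hh]
    simp only [hh]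
    ring
  -- φ is negative strictly below vs (for v ≥ 0)
  have hφneg : ∀ v, 0 ≤ v → v < vs → φ v < 0 := by
    intro v hv hlt
    by_contra hcon
    push_neg at hcon
    have hmem : v ∈ S := ⟨hv, hcon⟩
    have hbdd : BddBelow S := ⟨0, fun w hw => hw.1⟩
    exact absurd (csInf_le hbdd hmem) (not_le.mpr hlt)
  -- monotonicity of h on Icc 0 vs
  have hmono : MonotoneOn h (Set.Icc 0 vs) := by
    apply monotoneOn_of_deriv_nonneg (convex_Icc 0 vs)
    · -- continuity
      have hFcont : ContinuousOn F (Set.Icc 0 vs) := fun v hv =>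
        ((hF_deriv v hv.1).continuousAt).continuousWithinAt
      have hfcont : ContinuousOn f (Set.Icc 0 vs) :=
        (hf_diff.continuousOn).mono (fun v hv => hv.1)
      exact (continuousOn_id.mul hfcont).sub (continuousOn_const.sub hFcont)
    · -- differentiability on interior
      rw [interior_Icc]
      intro x hx
      have hx0 : (0:ℝ) < x := hx.1
      have hfd : DifferentiableAt ℝ f x :=
        hf_diff.differentiableAt (Ici_mem_nhds hx0)
      have hFd : DifferentiableAt ℝ F x := (hF_deriv x hx0.le).differentiableAt
      exact ((differentiableAt_id.mul hfd).sub
        ((differentiableAt_const _).sub hFd)).differentiableWithinAt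
    · -- derivative nonneg on interior
      rw [interior_Icc]
      intro x hx
      have hx0 : (0:ℝ) < x := hx.1
      have hfx : 0 < f x := hf_pos x hx0.le
      have hfd : DifferentiableAt ℝ f x :=
        hf_diff.differentiableAt (Ici_mem_nhds hx0)
      set f' : ℝ := deriv f x with hf'
      have hFd : HasDerivAt F (f x) x := hF_deriv x hx0.le
      -- derivative of h
      have h1 : HasDerivAt (fun v => v * f v) (1 * f x + x * f') x :=
        (hasDerivAt_id x).mul hfd.hasDerivAt
      have h2 : HasDerivAt (fun v => (1:ℝ) - F v) (0 - f x) x :=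
        (hasDerivAt_const x 1).sub hFd
      have hhd : HasDerivAt h (1 * f x + x * f' - (0 - f x)) x := h1.sub h2
      rw [hhd.deriv]
      -- derivative of φ
      have hq : HasDerivAt (fun v => (1 - F v) / f v)
          (((0 - f x) * f x - (1 - F x) * f') / (f x)^2) x :=
        (((hasDerivAt_const x 1).sub hFd).div hfd.hasDerivAt hfx.ne')
      have hφfun : φ = fun v => v - (1 - F v) / f v := funext hφ
      have hφd : HasDerivAt φ (1 - ((0 - f x) * f x - (1 - F x) * f') / (f x)^2) x := by
        rw [hφfun]
        exact (hasDerivAt_id x).sub hq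
      have hφd' : 0 ≤ 1 - ((0 - f x) * f x - (1 - F x) * f') / (f x)^2 :=
        aux_deriv_nonneg_of_monotoneOn hreg hx0 hφd
      -- regularity: (1-F x) * f' ≥ -2 (f x)^2
      have hreg' : -(2 * (f x)^2) ≤ (1 - F x) * f' := by
        have hsq : 0 < (f x)^2 := by positivity
        rw [sub_nonneg, div_le_one hsq] at hφd'
        nlinarith
      -- φ x < 0 gives x * f x ≤ 1 - F x
      have hφx : φ x < 0 := hφneg x hx0.le hx.2
      have hxf : x * f x ≤ 1 - F x := by
        rw [hφ x, sub_neg] at hφx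
        have := (lt_div_iff₀ hfx).mp hφx
        linarith
      -- conclude 0 ≤ 2 f x + x f'
      rcases le_or_gt 0 f' with hcase | hcase
      · nlinarith
      · have h3 : (1 - F x) * f' ≤ (x * f x) * f' :=
          mul_le_mul_of_nonpos_right hxf hcase.le
        have key : 0 ≤ f x * (1 * f x + x * f' - (0 - f x)) := by nlinarith
        have := (mul_nonneg_iff_of_pos_left hfx).mp key
        linarith
  -- transfer monotonicity back
  intro a ha b hb hab
  have h1 := hEq a ha.1
  have h2 := hEq b hb.1
  simp only [h1, h2]
  exact hmono ha hb hab
end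

section
/- Let x : [0,∞) → [0,1] be nondecreasing and let v̄ > 0. Then for every v ∈ (0, v̄] with x(v) > 0, the per-unit price satisfies (v·x(v) − ∫₀^v x(z) dz) / x(v) ≤ ∫₀^{v̄} (1 − x(z)) dz. -/
/-- **per-unit price bound.** For a nondecreasing allocation rule
`x : [0,∞) → [0,1]` and any `v̄ > 0`, every value `v ∈ (0, v̄]` with `x(v) > 0` is charged
per-unit price `(v·x(v) − ∫₀^v x(z) dz)/x(v)` at most `∫₀^{v̄} (1 − x(z)) dz`. -/
theorem per_unit_price_bound
    (x : ℝ → ℝ)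
    (hx_mono : MonotoneOn x (Set.Ici 0))
    (hx_bdd : ∀ v, 0 ≤ v → x v ∈ Set.Icc (0:ℝ) 1)
    (vbar : ℝ) (hvbar : 0 < vbar) :
    ∀ v ∈ Set.Ioc (0:ℝ) vbar, 0 < x v →
      (v * x v - ∫ z in (0:ℝ)..v, x z) / x v ≤ ∫ z in (0:ℝ)..vbar, (1 - x z) := by
  intro v hv hxv
  obtain ⟨hv0, hvvb⟩ := hv
  have hint : ∀ a b : ℝ, 0 ≤ a → a ≤ b → IntervalIntegrable x MeasureTheory.volume a b := by
    intro a b ha h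
    exact (hx_mono.mono (by
      rw [Set.uIcc_of_le h]
      exact fun z hz => Set.mem_Ici.mpr (ha.trans hz.1))).intervalIntegrable
  have hintv := hint 0 v le_rfl hv0.le
  have hintvb := hint 0 vbar le_rfl hvbar.le
  rw [div_le_iff₀ hxv]
  have key : v * x v - ∫ z in (0:ℝ)..v, x z ≤ (∫ z in (0:ℝ)..v, (1 - x z)) * x v := by
    have h1 : v * x v - ∫ z in (0:ℝ)..v, x z = ∫ z in (0:ℝ)..v, (x v - x z) := by
      rw [intervalIntegral.integral_sub intervalIntegrable_const hintv]
      simp [mul_comm]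
    have h2 : (∫ z in (0:ℝ)..v, (1 - x z)) * x v = ∫ z in (0:ℝ)..v, (1 - x z) * x v := by
      rw [intervalIntegral.integral_mul_const]
    rw [h1, h2]
    apply intervalIntegral.integral_mono_on hv0.le
    · exact intervalIntegrable_const.sub hintv
    · exact (intervalIntegrable_const.sub hintv).mul_const _
    · intro z hz
      have hz0 : 0 ≤ z := hz.1
      have hxz := hx_bdd z hz0
      have hxzv : x z ≤ x v := hx_mono hz0 hv0.le hz.2
      nlinarith [hxz.1, (hx_bdd v hv0.le).2]
  refine key.trans ?_
  have h3 : (∫ z in (0:ℝ)..vbar, (1 - x z)) = (∫ z in (0:ℝ)..v, (1 - x z)) +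
      ∫ z in v..vbar, (1 - x z) := by
    rw [intervalIntegral.integral_add_adjacent_intervals
      (intervalIntegrable_const.sub hintv) (intervalIntegrable_const.sub (hint v vbar hv0.le hvvb))]
  have h4 : 0 ≤ ∫ z in v..vbar, (1 - x z) := by
    apply intervalIntegral.integral_nonneg hvvb
    intro z hz
    have := (hx_bdd z (hv0.le.trans hz.1)).2
    linarith
  have hx1 := (hx_bdd v hv0.le)
  nlinarith [hx1.2]
end

section
/- Let x : [0,∞) → [0,1] be nondecreasing, let p₀ ∈ ℝ and ε > 0. Define x̂(v) = x(v + ε), p(v) = v·x(v) − ∫₀^v x(z) dz + p₀, and p̂(v) = v·x̂(v) − ∫₀^v x̂(z) dz − 2ε + p₀. Then for every v ≥ 0: (i) p̂(v) ≥ p(v + ε) − 3ε, and (ii) ∫₀^v x̂(z) dz + 2ε ≥ ∫₀^{v+ε} x(z) dz + ε. -/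
/-- **shifted mechanism bounds.** Let `x : [0,∞) → [0,1]` be
nondecreasing, `p₀ ∈ ℝ`, `ε > 0`, and set `x̂(v) = x(v + ε)`,
`p(v) = v·x(v) − ∫₀^v x(z) dz + p₀` and
`p̂(v) = v·x̂(v) − ∫₀^v x̂(z) dz − 2ε + p₀`.  Then for every `v ≥ 0`:
(i) `p̂(v) ≥ p(v + ε) − 3ε`, and
(ii) `∫₀^v x̂(z) dz + 2ε ≥ ∫₀^{v+ε} x(z) dz + ε`. -/
theorem shifted_mechanism_bounds
    (x : ℝ → ℝ)
    (hx_mono : MonotoneOn x (Set.Ici 0))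
    (hx_bdd : ∀ v, 0 ≤ v → x v ∈ Set.Icc (0:ℝ) 1)
    (p₀ ε : ℝ) (hε : 0 < ε) :
    ∀ v, 0 ≤ v →
      (v * x (v + ε) - (∫ z in (0:ℝ)..v, x (z + ε)) - 2 * ε + p₀ ≥
        ((v + ε) * x (v + ε) - (∫ z in (0:ℝ)..(v + ε), x z) + p₀) - 3 * ε) ∧
      ((∫ z in (0:ℝ)..v, x (z + ε)) + 2 * ε ≥
        (∫ z in (0:ℝ)..(v + ε), x z) + ε) := by
  intro v hv
  have hvε : (0:ℝ) ≤ v + ε := by linarith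
  have hsub : Set.uIcc (0:ℝ) (v + ε) ⊆ Set.Ici 0 := by
    rw [Set.uIcc_of_le hvε]; intro a ha; exact ha.1
  have hI : IntervalIntegrable x MeasureTheory.volume 0 (v + ε) :=
    (hx_mono.mono hsub).intervalIntegrable
  -- shift the integral
  have hshift : (∫ z in (0:ℝ)..v, x (z + ε)) = ∫ z in ε..(v + ε), x z := by
    have := intervalIntegral.integral_comp_add_right (a := (0:ℝ)) (b := v) x ε
    rw [zero_add] at this; exact this
  have hI1 : IntervalIntegrable x MeasureTheory.volume 0 ε := by
    apply hI.mono_set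
    rw [Set.uIcc_of_le hε.le, Set.uIcc_of_le hvε]
    exact Set.Icc_subset_Icc le_rfl (by linarith)
  have hI2 : IntervalIntegrable x MeasureTheory.volume ε (v + ε) := by
    apply hI.mono_set
    rw [Set.uIcc_of_le (by linarith : ε ≤ v + ε), Set.uIcc_of_le hvε]
    exact Set.Icc_subset_Icc hε.le le_rfl
  have hsplit : (∫ z in (0:ℝ)..ε, x z) + (∫ z in ε..(v + ε), x z)
      = ∫ z in (0:ℝ)..(v + ε), x z :=
    intervalIntegral.integral_add_adjacent_intervals hI1 hI2
  have h0 : (0:ℝ) ≤ ∫ z in (0:ℝ)..ε, x z := by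
    apply intervalIntegral.integral_nonneg hε.le
    intro u hu; exact (hx_bdd u hu.1).1
  have h1 : (∫ z in (0:ℝ)..ε, x z) ≤ ε := by
    have := intervalIntegral.integral_mono_on hε.le hI1
      (intervalIntegrable_const (c := (1:ℝ)))
      (fun u hu => (hx_bdd u hu.1).2)
    simpa using this
  have hxle : x (v + ε) ≤ 1 := (hx_bdd _ hvε).2
  have hxge : 0 ≤ x (v + ε) := (hx_bdd _ hvε).1
  constructor
  · rw [hshift]
    nlinarith [hsplit]
  · rw [hshift]
    linarith [hsplit]
end
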